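/- arXiv:2305.11346 — 9 statements merged into one kernel-verified Lean document; each statement's English description precedes it below -/
import Mathlib

section
/- Let R be a multirelation from X to Y and S a multirelation from Y to Z. Then α(R ∗ S) ⊆ α(R) ; α(S): for all a : X and c : Z, if α(R ∗ S) a c holds then there exists b : Y with α(R) a b and α(S) b c. -/
namespace MultiRel

variable {X Y Z : Type*}

/-- `α(R)` for a multirelation `R : X → Set Y → Prop`. -/
def alpha (R : X → Set Y → Prop) : X → Y → Prop := fun a b => ∃ B, R a B ∧ b ∈ B

/-- Peleg composition of multirelations. -/
def peleg (R : X → Set Y → Prop) (S : Y → Set Z → Prop) : X → Set Z → Prop :=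
  fun a C => ∃ B, R a B ∧ ∃ f : Y → Set Z, (∀ b ∈ B, S b (f b)) ∧ C = ⋃ b ∈ B, f b

/-- Relational composition. -/
def rcomp (T₁ : X → Y → Prop) (T₂ : Y → Z → Prop) : X → Z → Prop :=
  fun x z => ∃ y, T₁ x y ∧ T₂ y z

/-- Converse of a relation. -/
def conv (T : X → Y → Prop) : Y → X → Prop := fun b a => T a b

/-- Inner total part `ν(R)`. -/
def nu (R : X → Set Y → Prop) : X → Set Y → Prop := fun a B => R a B ∧ B.Nonempty

/-- Down-closure `↓R`. -/
def down (R : X → Set Y → Prop) : X → Set Y → Prop := fun a A => ∃ B, R a B ∧ A ⊆ B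

/-- Up-closure `↑R`. -/
def up (R : X → Set Y → Prop) : X → Set Y → Prop := fun a A => ∃ B, R a B ∧ B ⊆ A

/-- Outer determinisation `δo(R)`. -/
def deltao (R : X → Set Y → Prop) : X → Set Y → Prop :=
  fun a B => B = {b | ∃ C, R a C ∧ b ∈ C}

/-- Inner determinisation `δi(R)`. -/
def deltai (R : X → Set Y → Prop) : X → Set Y → Prop :=
  fun a B => ∃ b, (∃ C, R a C ∧ b ∈ C) ∧ B = {b}

/-- Dual of a multirelation. -/
def mdual (S : X → Set Y → Prop) : X → Set Y → Prop := fun a B => ¬ S a Bᶜ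

/-- Domain of a multirelation. -/
def domM (R : X → Set Y → Prop) : Set X := {a | ∃ B, R a B}

/-- Domain of a relation. -/
def domR (Q : X → Y → Prop) : Set X := {a | ∃ b, Q a b}

/-- Test restriction `R·P∗`. -/
def restr (R : X → Set Y → Prop) (P : Set Y) : X → Set Y → Prop := fun a B => R a B ∧ B ⊆ P

/-- Negated test restriction `R·¬P∗`. -/
def restrN (R : X → Set Y → Prop) (P : Set Y) : X → Set Y → Prop := fun a B => R a B ∧ ¬ B ⊆ P

/-- `η(Q)` for a relation `Q`. -/
def eta (Q : X → Y → Prop) : X → Set Y → Prop := fun a B => ∃ b, Q a b ∧ B = {b}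

/-- Power transpose `Λ(Q)` of a relation `Q`. -/
def Lam (Q : X → Y → Prop) : X → Set Y → Prop := fun a B => B = {b | Q a b}

/-- Peleg diamond `⟨R⟩∗ P`. -/
def diaP (R : X → Set Y → Prop) (P : Set Y) : Set X := {a | ∃ B, R a B ∧ B ⊆ P}

/-- Peleg box `[R]∗ P`. -/
def boxP (R : X → Set Y → Prop) (P : Set Y) : Set X := {a | ∀ B, R a B → (B ∩ P).Nonempty}

/-- Nerode–Wijesekera diamond `⟨R⟩α P`. -/
def diaA (R : X → Set Y → Prop) (P : Set Y) : Set X := {a | ∃ B, R a B ∧ (B ∩ P).Nonempty}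

/-- Nerode–Wijesekera box `[R]α P`. -/
def boxA (R : X → Set Y → Prop) (P : Set Y) : Set X := {a | ∀ B, R a B → B ⊆ P}

/-- Relational diamond `⟨Q⟩ᵣ P`. -/
def diaR (Q : X → Y → Prop) (P : Set Y) : Set X := {a | ∃ b, Q a b ∧ b ∈ P}

/-- Relational box `[Q]ᵣ P`. -/
def boxR (Q : X → Y → Prop) (P : Set Y) : Set X := {a | ∀ b, Q a b → b ∈ P}

/-- Graph diamond `⟨Q⟩ᴳ`. -/
def diaG (Q : X → Y → Prop) : Set Y → Set X → Prop := fun A P => P = diaR Q A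

/-- Graph box `[Q]ᴳ`. -/
def boxG (Q : X → Y → Prop) : Set Y → Set X → Prop := fun A P => P = boxR Q A

/-- Complementation relation `C` on `Set X`. -/
def Crel (X : Type*) : Set X → Set X → Prop := fun A B => B = Aᶜ

/-- Inclusion relation `Ω` on `Set X`. -/
def Omega (X : Type*) : Set X → Set X → Prop := fun A B => A ⊆ B

/-- Outer determinism: for every `a` there is exactly one `B` with `R a B`. -/
def outerDet (R : X → Set Y → Prop) : Prop := ∀ a, ∃! B, R a B

/-- Inner determinism: every related set is a singleton. -/
def innerDet (R : X → Set Y → Prop) : Prop := ∀ a B, R a B → ∃ b, B = {b}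

/-- Inner union `R ⋓ S`. -/
def iunion (R S : X → Set Y → Prop) : X → Set Y → Prop :=
  fun a D => ∃ B C, R a B ∧ S a C ∧ D = B ∪ C

theorem alpha_peleg_subset {X Y Z : Type*} (R : X → Set Y → Prop) (S : Y → Set Z → Prop) :
    ∀ (a : X) (c : Z), alpha (peleg R S) a c → ∃ b : Y, alpha R a b ∧ alpha S b c := by
  rintro a c ⟨C, ⟨B, hRB, f, hf, rfl⟩, hc⟩
  simp only [Set.mem_iUnion] at hc
  obtain ⟨b, hbB, hcf⟩ := hc
  exact ⟨b, ⟨B, hRB, hbB⟩, ⟨f b, hf b hbB, hcf⟩⟩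

end MultiRel
end

section
/- Let R be a multirelation from X to Y and P : Set Y. Then (1) {a | ∃ b ∈ P, α(R) a b} = {a | ∃ B, B.Nonempty ∧ (∃ C, R a C ∧ B ⊆ C) ∧ B ⊆ P} (in symbols, dom(α(R) restricted to P) = dom(ν(↓R)·P∗)), and (2) {a | ∃ b, α(R) a b ∧ b ∉ P} = {a | ∃ B, R a B ∧ ¬ B ⊆ P}. -/
namespace MultiRel

variable {X Y Z : Type*}

theorem dom_alpha_test {X Y : Type*} (R : X → Set Y → Prop) (P : Set Y) :
    ({a : X | ∃ b ∈ P, alpha R a b} =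
      {a : X | ∃ B : Set Y, B.Nonempty ∧ (∃ C, R a C ∧ B ⊆ C) ∧ B ⊆ P}) ∧
    ({a : X | ∃ b, alpha R a b ∧ b ∉ P} = {a : X | ∃ B, R a B ∧ ¬ B ⊆ P}) := by
  constructor
  · ext a
    constructor
    · rintro ⟨b, hbP, B, hRB, hbB⟩
      exact ⟨{b}, ⟨b, rfl⟩, ⟨B, hRB, by simpa using hbB⟩, by simpa using hbP⟩
    · rintro ⟨B, ⟨b, hb⟩, ⟨C, hRC, hBC⟩, hBP⟩
      exact ⟨b, hBP hb, C, hRC, hBC hb⟩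
  · ext a
    constructor
    · rintro ⟨b, ⟨B, hRB, hbB⟩, hbP⟩
      exact ⟨B, hRB, fun h => hbP (h hbB)⟩
    · rintro ⟨B, hRB, hBP⟩
      obtain ⟨b, hbB, hbP⟩ := Set.not_subset.mp hBP
      exact ⟨b, ⟨B, hRB, hbB⟩, hbP⟩

end MultiRel
end

section
/- Let R be a multirelation from X to Y and P : Set Y. Then [R]α P = [ν(↓R)]∗ P = [δi(R)]∗ P = [δo(R)]α P = [δi(R)]α P. -/
namespace MultiRel

variable {X Y Z : Type*}

theorem boxA_eq_variants {X Y : Type*} (R : X → Set Y → Prop) (P : Set Y) :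
    boxA R P = boxP (nu (down R)) P ∧
    boxP (nu (down R)) P = boxP (deltai R) P ∧
    boxP (deltai R) P = boxA (deltao R) P ∧
    boxA (deltao R) P = boxA (deltai R) P := by
  refine ⟨?_, ?_, ?_, ?_⟩ <;> ext a <;>
    simp only [boxA, boxP, nu, down, deltai, deltao, Set.mem_setOf_eq]
  · constructor
    · rintro h B ⟨⟨C, hC, hBC⟩, b, hb⟩
      exact ⟨b, hb, h C hC (hBC hb)⟩
    · intro h B hB b hb
      rcases h {b} ⟨⟨B, hB, by simpa using hb⟩, b, rfl⟩ with ⟨c, hc, hcP⟩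
      simp at hc; subst hc; exact hcP
  · constructor
    · rintro h B ⟨b, ⟨C, hC, hbC⟩, rfl⟩
      exact h {b} ⟨⟨C, hC, by simpa using hbC⟩, b, rfl⟩
    · rintro h B ⟨⟨C, hC, hBC⟩, b, hb⟩
      rcases h {b} ⟨b, ⟨C, hC, hBC hb⟩, rfl⟩ with ⟨c, hc, hcP⟩
      simp at hc; subst hc; exact ⟨_, hb, hcP⟩
  · constructor
    · rintro h B rfl b ⟨C, hC, hbC⟩
      rcases h {b} ⟨b, ⟨C, hC, hbC⟩, rfl⟩ with ⟨c, hc, hcP⟩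
      simp at hc; subst hc; exact hcP
    · rintro h B ⟨b, ⟨C, hC, hbC⟩, rfl⟩
      exact ⟨b, rfl, h _ rfl ⟨C, hC, hbC⟩⟩
  · constructor
    · rintro h B ⟨b, ⟨C, hC, hbC⟩, rfl⟩ c hc
      simp at hc; subst hc
      exact h _ rfl ⟨C, hC, hbC⟩
    · rintro h B rfl b ⟨C, hC, hbC⟩
      exact h {b} ⟨b, ⟨C, hC, hbC⟩, rfl⟩ rfl

end MultiRel
end

section
/- Let R be a multirelation from X to Y and P : Set Y. Then ⟨R⟩α P = ⟨ν(↓R)⟩∗ P = ⟨δi(R)⟩∗ P = ⟨δo(R)⟩α P = ⟨δi(R)⟩α P. -/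
namespace MultiRel

variable {X Y Z : Type*}

theorem diaA_eq_variants {X Y : Type*} (R : X → Set Y → Prop) (P : Set Y) :
    diaA R P = diaP (nu (down R)) P ∧
    diaP (nu (down R)) P = diaP (deltai R) P ∧
    diaP (deltai R) P = diaA (deltao R) P ∧
    diaA (deltao R) P = diaA (deltai R) P := by
  refine ⟨?_, ?_, ?_, ?_⟩ <;> ext a <;>
    simp only [diaA, diaP, nu, down, deltai, deltao, Set.mem_setOf_eq,
      Set.Nonempty, Set.mem_inter_iff, Set.subset_def, Set.mem_singleton_iff]
  · constructor
    · rintro ⟨B, hB, b, hbB, hbP⟩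
      exact ⟨{b}, ⟨⟨B, hB, by simp [Set.subset_def, hbB]⟩, ⟨b, rfl⟩⟩, by simp [hbP]⟩
    · rintro ⟨B, ⟨⟨C, hC, hBC⟩, b, hbB⟩, hBP⟩
      exact ⟨C, hC, b, hBC b hbB, hBP b hbB⟩
  · constructor
    · rintro ⟨B, ⟨⟨C, hC, hBC⟩, b, hbB⟩, hBP⟩
      exact ⟨{b}, ⟨b, ⟨C, hC, hBC b hbB⟩, rfl⟩, by simpa using hBP b hbB⟩
    · rintro ⟨B, ⟨b, ⟨C, hC, hbC⟩, rfl⟩, hBP⟩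
      exact ⟨{b}, ⟨⟨C, hC, by simp [Set.subset_def, hbC]⟩, ⟨b, rfl⟩⟩, hBP⟩
  · constructor
    · rintro ⟨B, ⟨b, ⟨C, hC, hbC⟩, rfl⟩, hBP⟩
      exact ⟨_, rfl, b, ⟨C, hC, hbC⟩, by simpa using hBP⟩
    · rintro ⟨B, rfl, b, ⟨C, hC, hbC⟩, hbP⟩
      exact ⟨{b}, ⟨b, ⟨C, hC, hbC⟩, rfl⟩, by simp [hbP]⟩
  · constructor
    · rintro ⟨B, rfl, b, ⟨C, hC, hbC⟩, hbP⟩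
      exact ⟨{b}, ⟨b, ⟨C, hC, hbC⟩, rfl⟩, b, rfl, hbP⟩
    · rintro ⟨B, ⟨b, h, rfl⟩, c, hc, hcP⟩
      exact ⟨_, rfl, c, hc ▸ h, hcP⟩

end MultiRel
end

section
/- Let R be a multirelation from X to Y and P : Set Y. Then the following four multirelations from X to Y are equal: (i) the multirelation relating a to B iff ∃ b, α(R) a b ∧ b ∈ P ∧ B = {b}; (ii) δi(R)·P∗; (iii) δi(↓R·P∗); (iv) δi(ν(↓R)·P∗). -/
namespace MultiRel

variable {X Y Z : Type*}

theorem deltai_test_eq {X Y : Type*} (R : X → Set Y → Prop) (P : Set Y) :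
    (fun (a : X) (B : Set Y) => ∃ b, alpha R a b ∧ b ∈ P ∧ B = {b}) = restr (deltai R) P ∧
    restr (deltai R) P = deltai (restr (down R) P) ∧
    deltai (restr (down R) P) = deltai (restr (nu (down R)) P) := by
  refine ⟨?_, ?_, ?_⟩
  · funext a B
    simp only [restr, deltai, alpha, eq_iff_iff]
    constructor
    · rintro ⟨b, ⟨C, hC, hb⟩, hbP, rfl⟩
      exact ⟨⟨b, ⟨C, hC, hb⟩, rfl⟩, by simpa using hbP⟩
    · rintro ⟨⟨b, ⟨C, hC, hb⟩, rfl⟩, hsub⟩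
      exact ⟨b, ⟨C, hC, hb⟩, hsub rfl, rfl⟩
  · funext a B
    simp only [restr, deltai, down, eq_iff_iff]
    constructor
    · rintro ⟨⟨b, ⟨C, hC, hb⟩, rfl⟩, hsub⟩
      exact ⟨b, ⟨{b}, ⟨⟨C, hC, by simpa using hb⟩, hsub⟩, rfl⟩, rfl⟩
    · rintro ⟨b, ⟨C, ⟨⟨D, hD, hCD⟩, hCP⟩, hb⟩, rfl⟩
      exact ⟨⟨b, ⟨D, hD, hCD hb⟩, rfl⟩, by simpa using hCP hb⟩
  · funext a B
    simp only [deltai, restr, nu, eq_iff_iff]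
    constructor
    · rintro ⟨b, ⟨C, ⟨hC, hCP⟩, hb⟩, rfl⟩
      exact ⟨b, ⟨C, ⟨⟨hC, ⟨b, hb⟩⟩, hCP⟩, hb⟩, rfl⟩
    · rintro ⟨b, ⟨C, ⟨⟨hC, _⟩, hCP⟩, hb⟩, rfl⟩
      exact ⟨b, ⟨C, ⟨hC, hCP⟩, hb⟩, rfl⟩

end MultiRel
end

section
/- Let Q : X → Y → Prop be a relation. Then (1) C ; (⟨Q⟩ᴳ ; Ω)⌣ = ⟨Q⌣⟩ᴳ ; C ; Ω⌣ as relations between Set X and Set Y, and (2) [Q]ᴳ ; Ω⌣ = (⟨Q⌣⟩ᴳ ; Ω)⌣ as relations between Set Y and Set X. Here in (1) the relation C is on Set X, Ω is on Set X on the left side, and on the right side C and Ω⌣ are on Set Y. -/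
namespace MultiRel

variable {X Y Z : Type*}

theorem graph_conjugation_galois {X Y : Type*} (Q : X → Y → Prop) :
    rcomp (Crel X) (conv (rcomp (diaG Q) (Omega X))) =
      rcomp (diaG (conv Q)) (rcomp (Crel Y) (conv (Omega Y))) ∧
    rcomp (boxG Q) (conv (Omega X)) = conv (rcomp (diaG (conv Q)) (Omega Y)) := by
  constructor
  · funext A B
    simp only [rcomp, conv, Crel, Omega, diaG, diaR, eq_iff_iff]
    constructor
    · rintro ⟨y, rfl, P, rfl, hP⟩
      exact ⟨_, rfl, _, rfl, fun b hb ⟨a, hQ, ha⟩ => hP ⟨b, hQ, hb⟩ ha⟩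
    · rintro ⟨P, rfl, C, rfl, hC⟩
      exact ⟨_, rfl, _, rfl, fun a ⟨b, hQ, hb⟩ ha => hC hb ⟨a, hQ, ha⟩⟩
  · funext A B
    simp only [rcomp, conv, Omega, boxG, diaG, boxR, diaR, eq_iff_iff]
    constructor
    · rintro ⟨P, rfl, hP⟩
      exact ⟨_, rfl, fun y ⟨b, hQ, hb⟩ => hP hb y hQ⟩
    · rintro ⟨P, rfl, hP⟩
      exact ⟨_, rfl, fun b hb y hQ => hP ⟨b, hQ, hb⟩⟩

end MultiRel
end

section
/- Let R be a multirelation from X to Y and P : Set Y. Then ⟨R⟩α P = [δo(R)]∗ P and [R]α P = ⟨δo(R)⟩∗ P. -/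
namespace MultiRel

variable {X Y Z : Type*}

theorem alpha_modal_deltao {X Y : Type*} (R : X → Set Y → Prop) (P : Set Y) :
    diaA R P = boxP (deltao R) P ∧ boxA R P = diaP (deltao R) P := by
  constructor <;> ext a <;>
    simp only [diaA, boxP, boxA, diaP, deltao, Set.mem_setOf_eq, forall_eq, exists_eq_left]
  · constructor
    · rintro ⟨B, hB, b, hbB, hbP⟩
      exact ⟨b, ⟨B, hB, hbB⟩, hbP⟩
    · rintro ⟨b, ⟨B, hB, hbB⟩, hbP⟩
      exact ⟨B, hB, b, hbB, hbP⟩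
  · constructor
    · rintro h b ⟨B, hB, hbB⟩
      exact h B hB hbB
    · rintro h B hB b hbB
      exact h ⟨B, hB, hbB⟩

end MultiRel
end

section
/- Goldblatt's axiom [R ∗ S]α P = [R]α ([S]α P) fails in the multirelational semantics: there exist a type X, a multirelation R from X to X, and P : Set X with [R ∗ R]α P ≠ [R]α ([R]α P). Concretely, for X = Bool, R a B ↔ (a = false ∧ B = Set.univ), and P = ∅, one has R ∗ R = ∅, hence [R ∗ R]α P = Set.univ, while [R]α ([R]α P) = {true}. -/
namespace MultiRel

variable {X Y Z : Type*}

theorem goldblatt_G3_fails :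
    (∃ (X : Type) (R : X → Set X → Prop) (P : Set X),
      boxA (peleg R R) P ≠ boxA R (boxA R P)) ∧
    (∀ R : Bool → Set Bool → Prop,
      (∀ a B, R a B ↔ (a = false ∧ B = Set.univ)) →
      peleg R R = (fun _ _ => False) ∧
      boxA (peleg R R) (∅ : Set Bool) = Set.univ ∧
      boxA R (boxA R (∅ : Set Bool)) = {true} ∧
      boxA (peleg R R) (∅ : Set Bool) ≠ boxA R (boxA R (∅ : Set Bool))) := by
  have main : ∀ R : Bool → Set Bool → Prop,
      (∀ a B, R a B ↔ (a = false ∧ B = Set.univ)) →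
      peleg R R = (fun _ _ => False) ∧
      boxA (peleg R R) (∅ : Set Bool) = Set.univ ∧
      boxA R (boxA R (∅ : Set Bool)) = {true} ∧
      boxA (peleg R R) (∅ : Set Bool) ≠ boxA R (boxA R (∅ : Set Bool)) := by
    intro R hR
    have hpel : peleg R R = (fun _ _ => False) := by
      funext a C
      simp only [eq_iff_iff, iff_false]
      rintro ⟨B, hB, f, hf, -⟩
      rw [hR] at hB
      have := hf true (hB.2 ▸ Set.mem_univ true)
      rw [hR] at this
      exact Bool.noConfusion this.1
    have hbox1 : boxA (peleg R R) (∅ : Set Bool) = Set.univ := by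
      rw [hpel]; ext a; simp [boxA]
    have hboxR : boxA R (∅ : Set Bool) = {true} := by
      ext a
      simp only [boxA, Set.mem_setOf_eq, Set.mem_singleton_iff]
      constructor
      · intro h
        by_contra ha
        have ha' : a = false := by cases a <;> simp_all
        have := h Set.univ ((hR a Set.univ).2 ⟨ha', rfl⟩)
        exact absurd (this (Set.mem_univ true)) (Set.notMem_empty true)
      · rintro rfl B hB
        rw [hR] at hB
        exact Bool.noConfusion hB.1
    have hbox2 : boxA R (boxA R (∅ : Set Bool)) = {true} := by
      rw [hboxR]
      ext a
      simp only [boxA, Set.mem_setOf_eq, Set.mem_singleton_iff]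
      constructor
      · intro h
        by_contra ha
        have ha' : a = false := by cases a <;> simp_all
        have := h Set.univ ((hR a Set.univ).2 ⟨ha', rfl⟩)
        have := this (Set.mem_univ false)
        simp at this
      · rintro rfl B hB
        rw [hR] at hB
        exact Bool.noConfusion hB.1
    refine ⟨hpel, hbox1, hbox2, ?_⟩
    rw [hbox1, hbox2]
    intro h
    have : false ∈ ({true} : Set Bool) := h ▸ Set.mem_univ false
    simp at this
  refine ⟨?_, main⟩
  obtain ⟨-, -, -, hne⟩ := main (fun a B => a = false ∧ B = Set.univ) (fun _ _ => Iff.rfl)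
  exact ⟨Bool, _, _, hne⟩

end MultiRel
end

section
/- Let R be a multirelation from X to Y, S a multirelation from Y to Z, and P : Set Z. Then [R]α ([S]α P) ⊆ [R ∗ S]α P. -/
namespace MultiRel

variable {X Y Z : Type*}

theorem boxA_peleg_weak {X Y Z : Type*} (R : X → Set Y → Prop) (S : Y → Set Z → Prop)
    (P : Set Z) : boxA R (boxA S P) ⊆ boxA (peleg R S) P := by
  rintro a ha C ⟨B, hB, f, hf, rfl⟩ z hz
  simp only [Set.mem_iUnion] at hz
  obtain ⟨b, hb, hzf⟩ := hz
  exact ha B hB hb (f b) (hf b hb) hzf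

end MultiRel
end
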